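/- Let B_n ⊆ {0,1}^n, S_n = {k ∈ [n] : {k} is a singleton part of SP(B_n)}, and let A_n ⊆ B_n be a subset such that for every part P of ⊓A_n := ⊓_{a∈A_n} SP(a) either |P ∩ S_n| ≤ 2, or |P ∩ S_n| > 2 and every b ∈ B_n \ A_n is either constant on P ∩ S_n, or b[P ∩ S_n] is imbalanced and b is constant on P' ∩ S_n for every other part P' of ⊓A_n with |P' ∩ S_n| > 2. Let p : A_n → B_n be injective, let Γ_p = {π ∈ Stab_n(B_n) : π·p(a) = a for all a ∈ A_n}, and let P_{>2} = {k ∈ S_n : |P(k) ∩ S_n| > 2, where P(k) is the part of ⊓A_n containing k}. Then for all π, π' ∈ Γ_p: if π^{-1} and π'^{-1} agree on [n] \ P_{>2}, then π^{-1} and π'^{-1} also agree on P_{>2} (hence π = π'). -/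

import Mathlib

/-- Binary strings of length `n`: the set `{0,1}ⁿ`. -/
abbrev Str (n : ℕ) := Fin n → Bool

/-- The action of `Sym_n` on strings, permuting positions: `(π·v)_i = v_{π⁻¹(i)}`. -/
def act {n : ℕ} (π : Equiv.Perm (Fin n)) (v : Str n) : Str n := fun i => v (π.symm i)

/-- The action of `Sym_n` on sets of strings. -/
def actSet {n : ℕ} (π : Equiv.Perm (Fin n)) (C : Set (Str n)) : Set (Str n) := act π '' C

/-- The (setwise) stabiliser of a set of strings. -/
def setStab {n : ℕ} (C : Set (Str n)) : Set (Equiv.Perm (Fin n)) := {π | actSet π C = C}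

/-- The orbit of a set of strings under `Sym_n`. -/
def setOrbit {n : ℕ} (C : Set (Str n)) : Set (Set (Str n)) := {D | ∃ π, D = actSet π C}

/-- An ordered partition of `{0,1}ⁿ`: a tuple of pairwise disjoint nonempty subsets
whose union is everything. -/
def IsOrderedPartition {n m : ℕ} (C : Fin m → Set (Str n)) : Prop :=
  (∀ i, (C i).Nonempty) ∧ (Pairwise fun i j => Disjoint (C i) (C j)) ∧ (⋃ i, C i) = Set.univ

/-- The stabiliser of an ordered partition (componentwise). -/
def tupStab {n m : ℕ} (C : Fin m → Set (Str n)) : Set (Equiv.Perm (Fin n)) :=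
  {π | ∀ i, actSet π (C i) = C i}

/-- The orbit of an ordered partition under the componentwise action of `Sym_n`. -/
def tupOrbit {n m : ℕ} (C : Fin m → Set (Str n)) : Set (Fin m → Set (Str n)) :=
  {D | ∃ π, D = fun i => actSet π (C i)}

/-- Pointwise stabiliser of a partition (setoid) of `[n]`: permutations fixing
each part setwise. -/
def ptStab {n : ℕ} (s : Setoid (Fin n)) : Set (Equiv.Perm (Fin n)) :=
  {π | ∀ P ∈ s.classes, (π : Fin n → Fin n) '' P = P}

/-- Setwise stabiliser of a partition of `[n]`: permutations mapping parts to parts. -/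
def swStab {n : ℕ} (s : Setoid (Fin n)) : Set (Equiv.Perm (Fin n)) :=
  {π | ∀ P ∈ s.classes, (π : Fin n → Fin n) '' P ∈ s.classes}

/-- A partition `s` of `[n]` is a supporting partition of `G` if its pointwise
stabiliser is contained in `G`. -/
def IsSupporting {n : ℕ} (G : Set (Equiv.Perm (Fin n))) (s : Setoid (Fin n)) : Prop :=
  ∀ π ∈ ptStab s, π ∈ G

/-- `s` is as coarse as `t`: every part of `t` is contained in some part of `s`. -/
def AsCoarseAs {X : Type*} (s t : Setoid X) : Prop :=
  ∀ P ∈ t.classes, ∃ Q ∈ s.classes, P ⊆ Q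

/-- `s` is the coarsest supporting partition of `G`. -/
def IsCoarsestSupp {n : ℕ} (G : Set (Equiv.Perm (Fin n))) (s : Setoid (Fin n)) : Prop :=
  IsSupporting G s ∧ ∀ t, IsSupporting G t → AsCoarseAs s t

/-- The intersection `⊓_{a ∈ A} f(a)` of a family of partitions: parts are the
nonempty intersections of parts. -/
def interSetoid {X ι : Type*} (A : Set ι) (f : ι → Setoid X) : Setoid X where
  r x y := ∀ a ∈ A, (f a).r x y
  iseqv := ⟨fun x a _ => (f a).refl x,
            fun h a ha => (f a).symm (h a ha),
            fun h h' a ha => (f a).trans (h a ha) (h' a ha)⟩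

/-- `SP(a)` for a string `a`: the partition of positions according to the bit of `a`. -/
def strSetoid {n : ℕ} (a : Str n) : Setoid (Fin n) where
  r k j := a k = a j
  iseqv := ⟨fun _ => rfl, Eq.symm, Eq.trans⟩

/-- `π ∈ Sym_n` realises a permutation `σ` of the parts of a partition `s` if
`π(P) = σ(P)` for every part `P`. -/
def Realises {n : ℕ} (π : Equiv.Perm (Fin n)) {s : Setoid (Fin n)}
    (σ : Equiv.Perm s.classes) : Prop :=
  ∀ P : s.classes, (π : Fin n → Fin n) '' (P : Set (Fin n)) = ((σ P : Set (Fin n)))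
/-- `b` is constant on a set `T` of positions: all zeros or all ones there. -/
def ConstOn {n : ℕ} (b : Str n) (T : Set (Fin n)) : Prop :=
  (∀ k ∈ T, b k = false) ∨ (∀ k ∈ T, b k = true)

/-- `b[T]` is imbalanced: exactly one `0` and ones elsewhere, or exactly one `1`
and zeros elsewhere. -/
def Imbalanced {n : ℕ} (b : Str n) (T : Set (Fin n)) : Prop :=
  (∃ k ∈ T, b k = false ∧ ∀ j ∈ T, j ≠ k → b j = true) ∨
  (∃ k ∈ T, b k = true ∧ ∀ j ∈ T, j ≠ k → b j = false)

/-!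
Put `τ = π * π'⁻¹`. It stabilises `B`, fixes every string of `A` (so it preserves the parts
of `⊓A`) and moves only points of `P_{>2}`. Suppose `τ k = l ≠ k`. Then the transposition
`(k l)` also stabilises `B`: it fixes the strings of `A` and those constant on `P(k) ∩ S`,
and on a string imbalanced on `P(k) ∩ S` with odd bit at `k` (resp. `l`) it acts as `τ`
(resp. `τ⁻¹`), because such a string is constant on the other large parts, the only other
places where `τ` moves points. But `{k}` is a part of the coarsest supporting partition of
`Stab(B)`, and as `(k l) ∈ Stab(B)`, moving `l` into it would still give a supporting partition.
-/

open Equiv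

section

variable {n : ℕ}

theorem act_mul (π ρ : Perm (Fin n)) (v : Str n) : act (π * ρ) v = act π (act ρ v) := rfl

theorem act_one (v : Str n) : act 1 v = v := rfl

theorem act_inv_act (π : Perm (Fin n)) (v : Str n) : act π⁻¹ (act π v) = v := by
  rw [← act_mul, inv_mul_cancel, act_one]

theorem act_act_inv (π : Perm (Fin n)) (v : Str n) : act π (act π⁻¹ v) = v := by
  rw [← act_mul, mul_inv_cancel, act_one]

theorem act_injective (π : Perm (Fin n)) : Function.Injective (act π) :=
  Function.LeftInverse.injective (g := act π⁻¹) (act_inv_act π)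

theorem act_swap_of_eq {b : Str n} {k l : Fin n} (h : b k = b l) : act (swap k l) b = b := by
  funext i
  simp only [act, symm_swap, swap_apply_def]
  split_ifs with hik hil
  · rw [hik, h]
  · rw [hil, h]
  · rfl

theorem mem_setStab_iff {B : Set (Str n)} {π : Perm (Fin n)} :
    π ∈ setStab B ↔ ∀ b, act π b ∈ B ↔ b ∈ B := by
  constructor
  · intro h b
    refine ⟨fun hb => ?_, fun hb => h ▸ ⟨b, hb, rfl⟩⟩
    rw [← h] at hb
    obtain ⟨c, hc, hcb⟩ := hb
    rwa [← act_injective π hcb]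
  · intro h
    ext c
    refine ⟨?_, fun hc => ⟨act π⁻¹ c, (h _).1 (by rwa [act_act_inv]), act_act_inv π c⟩⟩
    rintro ⟨b, hb, rfl⟩
    exact (h b).2 hb

def stabSubgroup (B : Set (Str n)) : Subgroup (Perm (Fin n)) where
  carrier := setStab B
  mul_mem' hπ hρ := mem_setStab_iff.2 fun b => by
    rw [act_mul, mem_setStab_iff.1 hπ, mem_setStab_iff.1 hρ]
  one_mem' := mem_setStab_iff.2 fun _ => Iff.rfl
  inv_mem' hπ := mem_setStab_iff.2 fun b => by
    rw [← mem_setStab_iff.1 hπ, act_act_inv]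

theorem swap_mem_setStab {B : Set (Str n)} {k l : Fin n}
    (h : ∀ b ∈ B, act (swap k l) b ∈ B) : swap k l ∈ setStab B := by
  refine mem_setStab_iff.2 fun b => ⟨fun hb => ?_, h b⟩
  simpa only [← act_mul, swap_mul_self, act_one] using h _ hb

theorem Setoid.rel_iff_eq_of_singleton_mem_classes {α : Type*} {s : Setoid α} {k : α}
    (hk : {k} ∈ s.classes) (x : α) : s x k ↔ x = k := by
  rw [← Set.mem_singleton_iff, s.eq_of_mem_classes hk rfl (s.mem_classes k) (s.refl k)]
  rfl

theorem mem_ptStab_iff {s : Setoid (Fin n)} {ρ : Perm (Fin n)} :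
    ρ ∈ ptStab s ↔ ∀ x, s (ρ x) x := by
  constructor
  · intro h x
    have hx : ρ x ∈ (ρ : Fin n → Fin n) '' {y | s y x} := ⟨x, s.refl x, rfl⟩
    rwa [h _ (s.mem_classes x)] at hx
  · rintro h _ ⟨y, rfl⟩
    ext z
    refine ⟨?_, fun hz => ⟨ρ.symm z, ?_, ρ.apply_symm_apply z⟩⟩
    · rintro ⟨x, hx, rfl⟩
      exact s.trans (h x) hx
    · have := h (ρ.symm z)
      rw [ρ.apply_symm_apply] at this
      exact s.trans (s.symm this) hz

-- `s.comap (if · = l then k else ·)` is `s` with `l` moved into the class `{k}`.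
theorem ptStab_glue {s : Setoid (Fin n)} {k l : Fin n} (hk : {k} ∈ s.classes)
    {ρ : Perm (Fin n)}
    (hρ : ρ ∈ ptStab (s.comap fun x => if x = l then k else x)) :
    ρ ∈ ptStab s ∨ swap k l * ρ ∈ ptStab s := by
  have hrk := Setoid.rel_iff_eq_of_singleton_mem_classes hk
  simp only [mem_ptStab_iff, Setoid.comap_rel, Perm.mul_apply] at hρ ⊢
  have hoff : ∀ x, x ≠ k → x ≠ l → s (ρ x) x ∧ ρ x ≠ k ∧ ρ x ≠ l := by
    intro x hxk hxl
    have h := hρ x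
    rw [if_neg hxl] at h
    split_ifs at h with hρl
    · exact absurd ((hrk x).1 (s.symm h)) hxk
    · exact ⟨h, fun hρk => hxk ((hrk x).1 (hρk ▸ s.symm h)), hρl⟩
  have hpair : ∀ x, x = k ∨ x = l → ρ x = k ∨ ρ x = l := by
    intro x hx
    have h := hρ x
    rw [show (if x = l then k else x) = k by rcases hx with rfl | rfl <;> simp, hrk] at h
    split_ifs at h with hρl
    exacts [Or.inr hρl, Or.inl h]
  by_cases hρk : ρ k = k
  · have hρl : ρ l = l := by
      rcases hpair l (Or.inr rfl) with h | h
      · rwa [ρ.injective (h.trans hρk.symm)]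
      · exact h
    left
    intro x
    by_cases hxk : x = k
    · rw [hxk, hρk]
    by_cases hxl : x = l
    · rw [hxl, hρl]
    exact (hoff x hxk hxl).1
  · have hρk' : ρ k = l := (hpair k (Or.inl rfl)).resolve_left hρk
    have hρl : ρ l = k := (hpair l (Or.inr rfl)).resolve_right fun h =>
      hρk (hρk'.trans (ρ.injective (hρk'.trans h.symm)).symm)
    right
    intro x
    by_cases hxk : x = k
    · rw [hxk, hρk', swap_apply_right]
    by_cases hxl : x = l
    · rw [hxl, hρl, swap_apply_left]
    obtain ⟨hx, hρxk, hρxl⟩ := hoff x hxk hxl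
    rwa [swap_apply_of_ne_of_ne hρxk hρxl]

theorem IsCoarsestSupp.swap_notMem {G : Subgroup (Perm (Fin n))} {s : Setoid (Fin n)}
    (hs : IsCoarsestSupp G s) {k l : Fin n} (hkl : k ≠ l) (hk : {k} ∈ s.classes) :
    swap k l ∉ G := by
  intro hswap
  set t := s.comap fun x => if x = l then k else x
  have ht : IsSupporting G t := by
    intro ρ hρ
    rcases ptStab_glue hk hρ with h | h
    · exact hs.1 ρ h
    · simpa [← mul_assoc] using G.mul_mem hswap (hs.1 _ h)
  obtain ⟨Q, hQ, htQ⟩ := hs.2 t ht _ (t.mem_classes k)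
  have hlk : t l k := by simp [t, Setoid.comap_rel]
  have hlQ : l ∈ Q := htQ hlk
  rw [s.eq_of_mem_classes hQ (htQ (t.refl k)) hk rfl] at hlQ
  exact hkl hlQ.symm

theorem ConstOn.eq {b : Str n} {T : Set (Fin n)} (h : ConstOn b T) {i j : Fin n}
    (hi : i ∈ T) (hj : j ∈ T) : b i = b j := by
  rcases h with h | h <;> rw [h i hi, h j hj]

theorem Imbalanced.exists_eq_of_ne {b : Str n} {T : Set (Fin n)} (h : Imbalanced b T) :
    ∃ j, ∀ i ∈ T, ∀ m ∈ T, i ≠ j → m ≠ j → b i = b m := by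
  rcases h with ⟨j, -, -, h⟩ | ⟨j, -, -, h⟩ <;>
    exact ⟨j, fun i hi m hm hij hmj => by rw [h i hi hij, h m hm hmj]⟩

theorem act_swap_eq_act {τ : Perm (Fin n)} {b : Str n} {T : Set (Fin n)} {k : Fin n}
    (hk : k ∈ T) (hτk : τ k ∈ T) (hτT : ∀ i ∈ T, τ⁻¹ i ∈ T)
    (hbT : ∀ i ∈ T, ∀ j ∈ T, i ≠ k → j ≠ k → b i = b j)
    (hbout : ∀ i ∉ T, b (τ⁻¹ i) = b i) :
    act (swap k (τ k)) b = act τ b := by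
  funext i
  change b ((swap k (τ k)).symm i) = b (τ⁻¹ i)
  rw [symm_swap]
  by_cases hi : i ∈ T
  swap
  · have hik : i ≠ k := by rintro rfl; exact hi hk
    have hil : i ≠ τ k := by rintro rfl; exact hi hτk
    rw [swap_apply_of_ne_of_ne hik hil, hbout i hi]
  rcases eq_or_ne i (τ k) with rfl | hil
  · rw [swap_apply_right]
    exact congrArg b (τ.symm_apply_apply k).symm
  have hτi : τ⁻¹ i ≠ k := fun h => hil (by rw [← h]; exact (τ.apply_symm_apply i).symm)
  rcases eq_or_ne i k with rfl | hik
  · rw [swap_apply_left]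
    exact hbT _ hτk _ (hτT _ hi) (Ne.symm hil) hτi
  · rw [swap_apply_of_ne_of_ne hik hil]
    exact hbT _ hi _ (hτT _ hi) hik hτi

theorem act_swap_mem {B : Set (Str n)} {τ : Perm (Fin n)} (hτ : τ ∈ setStab B)
    {b : Str n} (hb : b ∈ B) {T : Set (Fin n)} {k j : Fin n} (hk : k ∈ T)
    (hτT : ∀ i ∈ T, τ i ∈ T) (hτT' : ∀ i ∈ T, τ⁻¹ i ∈ T)
    (hbT : ∀ i ∈ T, ∀ m ∈ T, i ≠ j → m ≠ j → b i = b m)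
    (hbout : ∀ i ∉ T, b (τ⁻¹ i) = b i) :
    act (swap k (τ k)) b ∈ B := by
  have hτk := hτT k hk
  by_cases hjk : j = k
  · subst hjk
    rw [act_swap_eq_act hk hτk hτT' hbT hbout]
    exact (mem_setStab_iff.1 hτ b).2 hb
  by_cases hjl : j = τ k
  · subst hjl
    have hbout' : ∀ i ∉ T, b (τ⁻¹⁻¹ i) = b i := by
      intro i hi
      have hτi : τ i ∉ T := fun h => hi (by simpa using hτT' _ h)
      simpa using (hbout _ hτi).symm
    have := act_swap_eq_act (τ := τ⁻¹) hτk (by simpa using hk) (by simpa using hτT) hbT hbout'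
    rw [show τ⁻¹ (τ k) = k from τ.symm_apply_apply k, swap_comm] at this
    rw [this]
    exact (mem_setStab_iff.1 ((stabSubgroup B).inv_mem hτ) b).2 hb
  · rw [act_swap_of_eq (hbT k hk (τ k) hτk (Ne.symm hjk) (Ne.symm hjl))]
    exact hb

theorem swap_apply_mem_setStab {B A : Set (Str n)} {S : Set (Fin n)}
    (hA : ∀ P ∈ (interSetoid A strSetoid).classes,
        (P ∩ S).ncard ≤ 2 ∨
        ((P ∩ S).ncard > 2 ∧ ∀ b ∈ B \ A,
          ConstOn b (P ∩ S) ∨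
          (Imbalanced b (P ∩ S) ∧ ∀ P' ∈ (interSetoid A strSetoid).classes,
            P' ≠ P → (P' ∩ S).ncard > 2 → ConstOn b (P' ∩ S))))
    {τ : Perm (Fin n)} (hτB : τ ∈ setStab B) (hτA : ∀ a ∈ A, act τ a = a)
    (hτS : ∀ i ∈ τ.support, i ∈ S ∧ 2 < ({j | interSetoid A strSetoid j i} ∩ S).ncard)
    {k : Fin n} (hk : k ∈ τ.support) :
    swap k (τ k) ∈ setStab B := by
  set Q := interSetoid A strSetoid
  have hτQ : ∀ i, Q (τ i) i := fun i a ha => by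
    show a (τ i) = a i
    simpa [act] using (congrFun (hτA a ha) (τ i)).symm
  have hτQ' : ∀ i, Q (τ⁻¹ i) i := fun i => Q.symm (by simpa using hτQ (τ⁻¹ i))
  set T := {j | Q j k} ∩ S
  have hkT : k ∈ T := ⟨Q.refl k, (hτS k hk).1⟩
  have hmapsTo : ∀ σ : Perm (Fin n), σ.support = τ.support → (∀ i, Q (σ i) i) →
      ∀ i ∈ T, σ i ∈ T := by
    rintro σ hσ hσQ i ⟨hik, hiS⟩
    refine ⟨Q.trans (hσQ i) hik, ?_⟩
    by_cases hi : i ∈ σ.support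
    · exact (hτS _ (hσ ▸ σ.apply_mem_support.2 hi)).1
    · rwa [Perm.notMem_support.1 hi]
  apply swap_mem_setStab
  intro b hb
  by_cases hbA : b ∈ A
  · rwa [act_swap_of_eq (hτQ k b hbA).symm]
  rcases hA _ (Q.mem_classes k) with hsmall | ⟨-, hB⟩
  · exact absurd hsmall (not_le.2 (hτS k hk).2)
  rcases hB b ⟨hb, hbA⟩ with hconst | ⟨himb, hothers⟩
  · rwa [act_swap_of_eq (hconst.eq hkT (hmapsTo τ rfl hτQ k hkT))]
  obtain ⟨j, hj⟩ := himb.exists_eq_of_ne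
  refine act_swap_mem hτB hb hkT (hmapsTo τ rfl hτQ) (hmapsTo τ⁻¹ (Perm.support_inv τ) hτQ')
    hj fun i hi => ?_
  by_cases hiτ : i ∈ τ⁻¹.support
  · obtain ⟨hiS, hibig⟩ := hτS i (τ.support_inv ▸ hiτ)
    have hne : {x | Q x i} ≠ {x | Q x k} := fun h => hi ⟨h ▸ Q.refl i, hiS⟩
    have hτiS : τ⁻¹ i ∈ S := (hτS _ (τ.support_inv ▸ Perm.apply_mem_support.2 hiτ)).1
    exact (hothers _ (Q.mem_classes i) hne hibig).eq ⟨hτQ' i, hτiS⟩ ⟨Q.refl i, hiS⟩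
  · rw [Perm.notMem_support.1 hiτ]

end

theorem stmt_17_general {n : ℕ} (B : Set (Str n))
    (spB : Setoid (Fin n)) (hspB : IsCoarsestSupp (setStab B) spB)
    (S : Set (Fin n)) (hS : S = {k | {k} ∈ spB.classes})
    (A : Set (Str n))
    (hA : ∀ P ∈ (interSetoid A strSetoid).classes,
        (P ∩ S).ncard ≤ 2 ∨
        ((P ∩ S).ncard > 2 ∧ ∀ b ∈ B \ A,
          ConstOn b (P ∩ S) ∨
          (Imbalanced b (P ∩ S) ∧ ∀ P' ∈ (interSetoid A strSetoid).classes,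
            P' ≠ P → (P' ∩ S).ncard > 2 → ConstOn b (P' ∩ S))))
    (p : Str n → Str n)
    (P2 : Set (Fin n))
    (hP2 : P2 = {k | k ∈ S ∧ ({j | (interSetoid A strSetoid).r k j} ∩ S).ncard > 2}) :
    ∀ π π' : Equiv.Perm (Fin n), π ∈ setStab B → π' ∈ setStab B →
      (∀ a ∈ A, act π (p a) = a) → (∀ a ∈ A, act π' (p a) = a) →
      (∀ k ∈ P2ᶜ, π.symm k = π'.symm k) →
      (∀ k ∈ P2, π.symm k = π'.symm k) := by
  intro π π' hπB hπ'B hπA hπ'A hout k _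
  set τ := π * π'⁻¹
  have hτB : τ ∈ setStab B := (stabSubgroup B).mul_mem hπB ((stabSubgroup B).inv_mem hπ'B)
  have hτA : ∀ a ∈ A, act τ a = a := fun a ha =>
    calc act τ a = act π (act π'⁻¹ (act π' (p a))) := by rw [hπ'A a ha]; rfl
      _ = a := by rw [act_inv_act, hπA a ha]
  have hτS : ∀ i ∈ τ.support,
      i ∈ S ∧ 2 < ({j | interSetoid A strSetoid j i} ∩ S).ncard := by
    intro i hi
    have hiP2 : i ∈ P2 := by
      by_contra h
      apply Perm.mem_support.1 hi
      change π (π'.symm i) = i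
      rw [← hout i h, π.apply_symm_apply]
    rw [hP2] at hiP2
    obtain ⟨hiS, hibig⟩ := hiP2
    refine ⟨hiS, ?_⟩
    simpa only [Setoid.comm'] using hibig
  have hτk : τ k = k := by
    by_contra hne
    have hk := Perm.mem_support.2 hne
    have hkS : {k} ∈ spB.classes := by simpa [hS] using (hτS k hk).1
    exact IsCoarsestSupp.swap_notMem (G := stabSubgroup B) hspB (Ne.symm hne) hkS
      (swap_apply_mem_setStab hA hτB hτA hτS hk)
  exact π.symm_apply_eq.2 hτk.symm

/-- with `A_n ⊆ B_n` as in the previous statement, `p : A_n → B_n`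
injective, `Γ_p = {π ∈ Stab_n(B_n) : π·p(a) = a for all a ∈ A_n}` and `P_{>2}` the
set of positions of `S_n` in large parts of `⊓A_n`, any `π, π' ∈ Γ_p` whose inverses
agree outside `P_{>2}` also agree on `P_{>2}`. -/
theorem stmt_17 {n : ℕ} (B : Set (Str n))
    (spB : Setoid (Fin n)) (hspB : IsCoarsestSupp (setStab B) spB)
    (S : Set (Fin n)) (hS : S = {k | {k} ∈ spB.classes})
    (A : Set (Str n)) (hAB : A ⊆ B)
    (hA : ∀ P ∈ (interSetoid A strSetoid).classes,
        (P ∩ S).ncard ≤ 2 ∨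
        ((P ∩ S).ncard > 2 ∧ ∀ b ∈ B \ A,
          ConstOn b (P ∩ S) ∨
          (Imbalanced b (P ∩ S) ∧ ∀ P' ∈ (interSetoid A strSetoid).classes,
            P' ≠ P → (P' ∩ S).ncard > 2 → ConstOn b (P' ∩ S))))
    (p : Str n → Str n) (hmaps : Set.MapsTo p A B) (hinj : Set.InjOn p A)
    (P2 : Set (Fin n))
    (hP2 : P2 = {k | k ∈ S ∧ ({j | (interSetoid A strSetoid).r k j} ∩ S).ncard > 2}) :
    ∀ π π' : Equiv.Perm (Fin n), π ∈ setStab B → π' ∈ setStab B →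
      (∀ a ∈ A, act π (p a) = a) → (∀ a ∈ A, act π' (p a) = a) →
      (∀ k ∈ P2ᶜ, π.symm k = π'.symm k) →
      (∀ k ∈ P2, π.symm k = π'.symm k) :=
  stmt_17_general B spB hspB S hS A hA p P2 hP2
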